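/- arXiv:2212.08707 — 3 statements merged into one kernel-verified Lean document; each statement's English description precedes it below -/
import Mathlib

section
/- Let α ∈ (0,1), let X be a metric space, and let Y ⊆ X be a nonempty closed subset; let π : X → X/Y be the quotient map onto the metric quotient with quotient metric ρ. (1) If Y (with the induced metric) is α-uniformly disconnected, then π is 1-Lipschitz and (9/α + 8)-light: for every δ > 0 and every subset E ⊆ X/Y with ρ-diameter at most δ, every δ-chain (with respect to d) contained in π⁻¹(E) has d-diameter at most (9/α + 8)·δ. (2) Conversely, if π is 1-Lipschitz and Q-light for some Q > 0, then Y is β-uniformly disconnected for every β ∈ (0, 1/Q). -/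
open Metric Set

namespace Paper

/-- `A` is a Jordan arc in `X` with endpoints `x` and `y`
(with the convention that the degenerate arc `[x,x]` is `{x}`). -/
def IsArcWithEndpoints {X : Type*} [TopologicalSpace X] (A : Set X) (x y : X) : Prop :=
  (x = y ∧ A = {x}) ∨
  ∃ γ : Set.Icc (0:ℝ) 1 → X, Topology.IsEmbedding γ ∧ Set.range γ = A ∧
    γ ⟨0, by norm_num⟩ = x ∧ γ ⟨1, by norm_num⟩ = y

/-- A metric tree: compact, connected, locally connected, and any two distinct
points are the endpoints of a unique Jordan arc. -/
def IsTree (T : Type*) [MetricSpace T] : Prop :=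
  CompactSpace T ∧ ConnectedSpace T ∧ LocallyConnectedSpace T ∧
    ∀ x y : T, x ≠ y → ∃! A : Set T, IsArcWithEndpoints A x y

/-- `C`-bounded turning metric space. -/
def BoundedTurning (C : ℝ) (X : Type*) [MetricSpace X] : Prop :=
  ∀ u v : X, ∃ E : Set X, IsCompact E ∧ IsConnected E ∧ u ∈ E ∧ v ∈ E ∧
    Metric.diam E ≤ C * dist u v

/-- `D`-doubling metric space: every ball of radius `r` is covered by at most `D`
balls of radius `r/2`. -/
def Doubling (D : ℝ) (X : Type*) [MetricSpace X] : Prop :=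
  ∀ (x : X) (r : ℝ), 0 < r →
    ∃ F : Finset X, (F.card : ℝ) ≤ D ∧ Metric.ball x r ⊆ ⋃ y ∈ F, Metric.ball y (r / 2)

/-- The leaf set of `T`: points whose complement is connected. -/
def leafSet (T : Type*) [MetricSpace T] : Set T :=
  {p | IsConnected ({p}ᶜ : Set T)}

/-- The branch set of `T`: points whose complement has at least three connected
components. -/
def branchSet (T : Type*) [MetricSpace T] : Set T :=
  {p | ∃ x ∈ ({p}ᶜ : Set T), ∃ y ∈ ({p}ᶜ : Set T), ∃ z ∈ ({p}ᶜ : Set T),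
    connectedComponentIn ({p}ᶜ) x ≠ connectedComponentIn ({p}ᶜ) y ∧
    connectedComponentIn ({p}ᶜ) x ≠ connectedComponentIn ({p}ᶜ) z ∧
    connectedComponentIn ({p}ᶜ) y ≠ connectedComponentIn ({p}ᶜ) z}

/-- The quotient distance of the metric quotient `X/E`, computed on representatives. -/
noncomputable def qdist {X : Type*} [MetricSpace X] (E : Set X) (a b : X) : ℝ :=
  min (dist a b) (infDist a E + infDist b E)

/-- The restriction of `f` to `S` is `Q`-light: for every `r > 0` and every `E` of
diameter at most `r`, every `r`-chain contained in `S ∩ f ⁻¹' E` has diameter at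
most `Q * r`. -/
def IsLightOn {X Y : Type*} [MetricSpace X] [MetricSpace Y] (Q : ℝ) (f : X → Y)
    (S : Set X) : Prop :=
  ∀ r : ℝ, 0 < r → ∀ E : Set Y, Metric.diam E ≤ r →
    ∀ (n : ℕ) (z : Fin (n + 1) → X), (∀ i, z i ∈ S) → (∀ i, f (z i) ∈ E) →
      (∀ i : Fin n, dist (z i.castSucc) (z i.succ) ≤ r) →
      ∀ i j, dist (z i) (z j) ≤ Q * r

/-- `f` is `Q`-light. -/
def IsLight {X Y : Type*} [MetricSpace X] [MetricSpace Y] (Q : ℝ) (f : X → Y) : Prop :=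
  IsLightOn Q f Set.univ

/-- A function `g` on `X`, constant on `M` (hence descending to the metric quotient
`X/M`), is `Q`-light as a map on the quotient: chains and diameters are measured
with the quotient distance `qdist M`. -/
def IsQuotLight {X : Type*} [MetricSpace X] (Q : ℝ) (M : Set X) (g : X → ℝ) : Prop :=
  ∀ r : ℝ, 0 < r → ∀ E : Set ℝ, Metric.diam E ≤ r →
    ∀ (n : ℕ) (z : Fin (n + 1) → X), (∀ i, g (z i) ∈ E) →
      (∀ i : Fin n, qdist M (z i.castSucc) (z i.succ) ≤ r) →
      ∀ i j, qdist M (z i) (z j) ≤ Q * r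

/-- `S` is `α`-uniformly disconnected: it contains no nondegenerate relative `α`-chain. -/
def UniformlyDisconnected {X : Type*} [MetricSpace X] (α : ℝ) (S : Set X) : Prop :=
  ¬ ∃ (n : ℕ) (z : Fin (n + 1) → X), (∀ i, z i ∈ S) ∧ z 0 ≠ z (Fin.last n) ∧
      ∀ i : Fin n, dist (z i.castSucc) (z i.succ) ≤ α * dist (z 0) (z (Fin.last n))

/-- `N` is an `ε`-Whitney net in `B` with respect to `A`. -/
def IsWhitneyNet {X : Type*} [MetricSpace X] (ε : ℝ) (A B N : Set X) : Prop :=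
  N ⊆ B \ A ∧
  (∀ u ∈ N, ∀ v ∈ N, u ≠ v → ε * max (infDist u A) (infDist v A) ≤ dist u v) ∧
  ∀ N' : Set X, N ⊆ N' → N' ⊆ B \ A →
    (∀ u ∈ N', ∀ v ∈ N', u ≠ v → ε * max (infDist u A) (infDist v A) ≤ dist u v) →
    N' = N

end Paper

/-!
(1) A chain point at distance more than `δ` from `Y` forces the whole set `S`, of
quotient diameter at most `δ`, into the `δ`-ball around it. Otherwise every chain point
lies within `4δ` of some point of `Y`; these shadow points form a `9δ`-chain in `Y`,
which uniform disconnectedness confines to diameter `9δ/α`, and the chain lies within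
`4δ` of it.

(2) A nondegenerate relative `β`-chain in `Y` of end-to-end distance `D` is a `βD`-chain
in the set `Y`, whose quotient diameter is `0`, so lightness gives `D ≤ QβD < D`.
-/

namespace Paper

variable {X : Type*} [MetricSpace X]

/-- `Q`-lightness of `X → X/Y`, a subset of `X/Y` being represented by its preimage in `X`. -/
def IsQuotientMapLight (Q : ℝ) (Y : Set X) : Prop :=
  ∀ δ : ℝ, 0 < δ → ∀ S : Set X, (∀ a ∈ S, ∀ b ∈ S, qdist Y a b ≤ δ) →
    ∀ (n : ℕ) (z : Fin (n + 1) → X), (∀ i, z i ∈ S) →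
      (∀ i : Fin n, dist (z i.castSucc) (z i.succ) ≤ δ) →
      ∀ i j, dist (z i) (z j) ≤ Q * δ

theorem qdist_le_dist (Y : Set X) (a b : X) : qdist Y a b ≤ dist a b :=
  min_le_left _ _

theorem qdist_eq_zero_of_mem {Y : Set X} {a b : X} (ha : a ∈ Y) (hb : b ∈ Y) :
    qdist Y a b = 0 := by
  simp [qdist, infDist_zero_of_mem ha, infDist_zero_of_mem hb]

theorem dist_le_of_qdist_le_of_lt_infDist {Y : Set X} {a b : X} {δ : ℝ}
    (hab : qdist Y a b ≤ δ) (ha : δ < infDist a Y) : dist a b ≤ δ := by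
  rcases min_le_iff.mp hab with h | h
  · exact h
  · linarith [infDist_nonneg (x := b) (s := Y)]

namespace UniformlyDisconnected

variable {α r : ℝ} {Y : Set X}

theorem dist_first_last_le (hY : UniformlyDisconnected α Y) (hα : 0 < α) (hr : 0 ≤ r)
    {n : ℕ} (y : Fin (n + 1) → X) (hyY : ∀ i, y i ∈ Y)
    (hstep : ∀ i : Fin n, dist (y i.castSucc) (y i.succ) ≤ r) :
    dist (y 0) (y (Fin.last n)) ≤ r / α := by
  by_cases hne : y 0 = y (Fin.last n)
  · rw [hne, dist_self]; positivity
  · rw [le_div_iff₀' hα]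
    by_contra! hlt
    exact hY ⟨n, y, hyY, hne, fun i => (hstep i).trans hlt.le⟩

theorem dist_le (hY : UniformlyDisconnected α Y) (hα : 0 < α) (hr : 0 ≤ r)
    {n : ℕ} (y : Fin (n + 1) → X) (hyY : ∀ i, y i ∈ Y)
    (hstep : ∀ i : Fin n, dist (y i.castSucc) (y i.succ) ≤ r) (i j : Fin (n + 1)) :
    dist (y i) (y j) ≤ r / α := by
  wlog hij : i ≤ j generalizing i j
  · rw [dist_comm]; exact this j i (le_of_not_ge hij)
  -- The chain from `y i` to `y j`, padded with copies of `y j` to keep length `n`.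
  let w : Fin (n + 1) → X := fun k => y ⟨min ((i : ℕ) + k) j, by omega⟩
  have hw0 : w 0 = y i := by simp only [w]; congr; simpa using hij
  have hwn : w (Fin.last n) = y j := by simp only [w]; congr; simp; omega
  have hwstep : ∀ k : Fin n, dist (w k.castSucc) (w k.succ) ≤ r := by
    intro k
    by_cases hk : (i : ℕ) + k < j
    · convert hstep ⟨i + k, by omega⟩ using 2 <;> simp only [w] <;> congr 1 <;> ext <;>
        simp <;> omega
    · have : w k.castSucc = w k.succ := by simp only [w]; congr 2; simp; omega
      rw [this, dist_self]; exact hr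
  simpa [hw0, hwn] using hY.dist_first_last_le hα hr w (fun k => hyY _) hwstep

/-- The shadow points in `Y` are taken within `4δ`; any factor `c > 1` would do, giving the
constant `(2c + 1)/α + 2c`. -/
theorem dist_le_of_infDist_le (hY : UniformlyDisconnected α Y) (hα : 0 < α)
    (hYne : Y.Nonempty) {δ : ℝ} (hδ : 0 < δ) {n : ℕ} (z : Fin (n + 1) → X)
    (hnear : ∀ k, infDist (z k) Y ≤ δ)
    (hstep : ∀ k : Fin n, dist (z k.castSucc) (z k.succ) ≤ δ) (i j : Fin (n + 1)) :
    dist (z i) (z j) ≤ (9 / α + 8) * δ := by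
  have hshadow : ∀ k, ∃ w ∈ Y, dist (z k) w < 4 * δ := fun k =>
    (infDist_lt_iff hYne).mp ((hnear k).trans_lt (by linarith))
  choose y hyY hzy using hshadow
  have hystep : ∀ k : Fin n, dist (y k.castSucc) (y k.succ) ≤ 9 * δ := fun k =>
    calc dist (y k.castSucc) (y k.succ)
        ≤ dist (y k.castSucc) (z k.castSucc) + dist (z k.castSucc) (z k.succ)
          + dist (z k.succ) (y k.succ) := dist_triangle4 _ _ _ _
      _ ≤ 4 * δ + δ + 4 * δ := by
          gcongr
          · rw [dist_comm]; exact (hzy _).le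
          · exact hstep k
          · exact (hzy _).le
      _ = 9 * δ := by ring
  calc dist (z i) (z j) ≤ dist (z i) (y i) + dist (y i) (y j) + dist (y j) (z j) :=
        dist_triangle4 _ _ _ _
    _ ≤ 4 * δ + 9 * δ / α + 4 * δ := by
        gcongr
        · exact (hzy i).le
        · exact hY.dist_le hα (by positivity) y hyY hystep i j
        · rw [dist_comm]; exact (hzy j).le
    _ = (9 / α + 8) * δ := by ring

end UniformlyDisconnected

theorem isQuotientMapLight_of_uniformlyDisconnected {α : ℝ} {Y : Set X} (hYne : Y.Nonempty)
    (hα : 0 < α) (hY : UniformlyDisconnected α Y) : IsQuotientMapLight (9 / α + 8) Y := by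
  intro δ hδ S hS n z hzS hstep
  by_cases hfar : ∃ k, δ < infDist (z k) Y
  · obtain ⟨k, hk⟩ := hfar
    have hball : ∀ l, dist (z k) (z l) ≤ δ := fun l =>
      dist_le_of_qdist_le_of_lt_infDist (hS _ (hzS k) _ (hzS l)) hk
    intro i j
    calc dist (z i) (z j) ≤ dist (z k) (z i) + dist (z k) (z j) := dist_triangle_left _ _ _
      _ ≤ δ + δ := add_le_add (hball i) (hball j)
      _ ≤ (9 / α + 8) * δ := by nlinarith [div_pos (by norm_num : (0 : ℝ) < 9) hα]
  · push Not at hfar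
    exact hY.dist_le_of_infDist_le hα hYne hδ z hfar hstep

theorem uniformlyDisconnected_of_isQuotientMapLight {Q β : ℝ} {Y : Set X}
    (hY : IsQuotientMapLight Q Y) (hβ : 0 < β) (hQβ : Q * β < 1) :
    UniformlyDisconnected β Y := by
  rintro ⟨n, z, hzY, hne, hchain⟩
  have hD : 0 < dist (z 0) (z (Fin.last n)) := dist_pos.mpr hne
  have hdiam : ∀ a ∈ Y, ∀ b ∈ Y, qdist Y a b ≤ β * dist (z 0) (z (Fin.last n)) :=
    fun a ha b hb => (qdist_eq_zero_of_mem ha hb).trans_le (by positivity)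
  have hlight := hY _ (by positivity) Y hdiam n z hzY hchain 0 (Fin.last n)
  linarith [mul_lt_of_lt_one_left hD hQβ, mul_assoc Q β (dist (z 0) (z (Fin.last n)))]

end Paper

theorem statement3_general (X : Type*) [MetricSpace X] (Y : Set X) (hY : Y.Nonempty)
    (α : ℝ) (hα : α ∈ Set.Ioo (0 : ℝ) 1) :
    (Paper.UniformlyDisconnected α Y →
      (∀ a b : X, Paper.qdist Y a b ≤ 1 * dist a b) ∧
      (∀ δ : ℝ, 0 < δ → ∀ S : Set X, (∀ a ∈ S, ∀ b ∈ S, Paper.qdist Y a b ≤ δ) →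
        ∀ (n : ℕ) (z : Fin (n + 1) → X), (∀ i, z i ∈ S) →
          (∀ i : Fin n, dist (z i.castSucc) (z i.succ) ≤ δ) →
          ∀ i j, dist (z i) (z j) ≤ (9 / α + 8) * δ)) ∧
    (∀ Q : ℝ, 0 < Q →
      (∀ a b : X, Paper.qdist Y a b ≤ 1 * dist a b) →
      (∀ δ : ℝ, 0 < δ → ∀ S : Set X, (∀ a ∈ S, ∀ b ∈ S, Paper.qdist Y a b ≤ δ) →
        ∀ (n : ℕ) (z : Fin (n + 1) → X), (∀ i, z i ∈ S) →
          (∀ i : Fin n, dist (z i.castSucc) (z i.succ) ≤ δ) →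
          ∀ i j, dist (z i) (z j) ≤ Q * δ) →
      ∀ β : ℝ, 0 < β → β < 1 / Q → Paper.UniformlyDisconnected β Y) := by
  refine ⟨fun hUD => ⟨?_, ?_⟩, fun Q hQ _ hLight β hβ hβQ => ?_⟩
  · simpa only [one_mul] using Paper.qdist_le_dist Y
  · exact Paper.isQuotientMapLight_of_uniformlyDisconnected hY hα.1 hUD
  · refine Paper.uniformlyDisconnected_of_isQuotientMapLight hLight hβ ?_
    rw [mul_comm]; exact (lt_div_iff₀ hQ).mp hβQ

/-- (1) If `Y ⊆ X` is α-uniformly disconnected, the quotient map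
`π : X → X/Y` is 1-Lipschitz and `(9/α + 8)`-light; subsets of `X/Y` are encoded by
their full preimages `S ⊆ X`, whose quotient diameter is measured by `Paper.qdist Y`.
(2) Conversely, if `π` is 1-Lipschitz and `Q`-light then `Y` is β-uniformly
disconnected for every `β ∈ (0, 1/Q)`. -/
theorem statement3 (X : Type*) [MetricSpace X] (Y : Set X) (hY : Y.Nonempty)
    (hYc : IsClosed Y) (α : ℝ) (hα : α ∈ Set.Ioo (0 : ℝ) 1) :
    (Paper.UniformlyDisconnected α Y →
      (∀ a b : X, Paper.qdist Y a b ≤ 1 * dist a b) ∧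
      (∀ δ : ℝ, 0 < δ → ∀ S : Set X, (∀ a ∈ S, ∀ b ∈ S, Paper.qdist Y a b ≤ δ) →
        ∀ (n : ℕ) (z : Fin (n + 1) → X), (∀ i, z i ∈ S) →
          (∀ i : Fin n, dist (z i.castSucc) (z i.succ) ≤ δ) →
          ∀ i j, dist (z i) (z j) ≤ (9 / α + 8) * δ)) ∧
    (∀ Q : ℝ, 0 < Q →
      (∀ a b : X, Paper.qdist Y a b ≤ 1 * dist a b) →
      (∀ δ : ℝ, 0 < δ → ∀ S : Set X, (∀ a ∈ S, ∀ b ∈ S, Paper.qdist Y a b ≤ δ) →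
        ∀ (n : ℕ) (z : Fin (n + 1) → X), (∀ i, z i ∈ S) →
          (∀ i : Fin n, dist (z i.castSucc) (z i.succ) ≤ δ) →
          ∀ i j, dist (z i) (z j) ≤ Q * δ) →
      ∀ β : ℝ, 0 < β → β < 1 / Q → Paper.UniformlyDisconnected β Y) :=
  statement3_general X Y hY α hα
end

section
/- Let (X,d) be a metric space, B ⊆ X a subset, E ⊆ X a nonempty closed subset, and α ∈ (0, 1/8]. Let ρ(x,y) := min{d(x,y), d(x,E) + d(y,E)} denote the quotient distance of X/E computed on representatives. If there exist points z_0, …, z_n ∈ B ∪ E with ρ(z_0, z_n) > 0 and ρ(z_i, z_{i+1}) ≤ α·ρ(z_0, z_n) for all 0 ≤ i < n (a nondegenerate relative α-chain in the image of B ∪ E in X/E), then there exist points w_0, …, w_m ∈ B with w_0 ≠ w_m such that d(w_j, w_{j+1}) ≤ 8α·d(w_0, w_m) for all 0 ≤ j < m and d(w_0, E) > 2·d(w_0, w_m). -/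
open Metric Set

/-!
Let `δ = ρ(z 0, z n)`. Since `δ ≤ d(z 0, E) + d(z n, E)`, after reversing the chain we may assume
`d(z 0, E) ≥ δ / 2`. Stop the chain at the first `z k` with `d(z 0, z k) ≥ δ / 8`. Before that index
the points are within `δ / 8` of `z 0`, hence at distance `> 3δ/8` from `E`, and one more step of
quotient length `≤ αδ ≤ δ/8` keeps `z k` at distance `> δ/4`. So the truncated chain avoids `E`,
each quotient step `≤ αδ < d(a, E) + d(b, E)` is a genuine distance step, and
`δ / 8 ≤ d(z 0, z k) < δ / 4` gives both the `8α` bound and `2 d(z 0, z k) < δ / 2 ≤ d(z 0, E)`.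
-/

open Metric

namespace Paper

variable {X : Type*} [MetricSpace X] {E : Set X}

theorem qdist_comm (E : Set X) (a b : X) : qdist E a b = qdist E b a := by
  unfold qdist; rw [dist_comm, add_comm]

theorem infDist_sub_le_qdist (E : Set X) (a b : X) :
    infDist a E - infDist b E ≤ qdist E a b :=
  le_min (by linarith [infDist_le_infDist_add_dist (s := E) (x := a) (y := b)])
    (by linarith [infDist_nonneg (s := E) (x := b)])

theorem dist_le_of_qdist_le {a b : X} {r : ℝ} (h : qdist E a b ≤ r)
    (hr : r < infDist a E + infDist b E) : dist a b ≤ r := by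
  rcases min_le_iff.mp h with h | h
  · exact h
  · linarith

theorem exists_first_exit_of_le_dist (z : ℕ → X) {n : ℕ} {r : ℝ}
    (h : r ≤ dist (z 0) (z n)) :
    ∃ k ≤ n, r ≤ dist (z 0) (z k) ∧ ∀ j < k, dist (z 0) (z j) < r := by
  classical
  have hex : ∃ k, k ≤ n ∧ r ≤ dist (z 0) (z k) := ⟨n, le_rfl, h⟩
  obtain ⟨hkn, hk⟩ := Nat.find_spec hex
  refine ⟨Nat.find hex, hkn, hk, fun j hj => ?_⟩
  by_contra! hjr
  exact Nat.find_min hex hj ⟨by omega, hjr⟩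

theorem exists_far_chain_of_half_le_infDist {B : Set X} {α δ : ℝ} (hα₀ : 0 ≤ α)
    (hα : α ≤ 1 / 8) (hδ : 0 < δ) (z : ℕ → X) {n : ℕ} (hmem : ∀ j ≤ n, z j ∈ B ∪ E)
    (hstep : ∀ j < n, qdist E (z j) (z (j + 1)) ≤ α * δ)
    (hend : δ ≤ dist (z 0) (z n)) (hstart : δ / 2 ≤ infDist (z 0) E) :
    ∃ k, z 0 ≠ z k ∧ (∀ j ≤ k, z j ∈ B) ∧
      (∀ j < k, dist (z j) (z (j + 1)) ≤ 8 * α * dist (z 0) (z k)) ∧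
      2 * dist (z 0) (z k) < infDist (z 0) E := by
  obtain ⟨k, hkn, hfar, hnear⟩ := exists_first_exit_of_le_dist z (n := n) (r := δ / 8) (by linarith)
  obtain ⟨K, rfl⟩ : ∃ K, k = K + 1 := Nat.exists_eq_add_one.mpr <| Nat.pos_of_ne_zero <| by
    rintro rfl; simp at hfar; linarith
  have hαδ : α * δ ≤ δ / 8 := by nlinarith
  have hE_near : ∀ j < K + 1, 3 * δ / 8 < infDist (z j) E := fun j hj => by
    linarith [hnear j hj, infDist_le_infDist_add_dist (s := E) (x := z 0) (y := z j)]
  have hE : ∀ j ≤ K + 1, δ / 4 < infDist (z j) E := by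
    intro j hj
    rcases hj.lt_or_eq with hj | rfl
    · linarith [hE_near j hj]
    · linarith [hE_near K K.lt_succ_self, infDist_sub_le_qdist E (z K) (z (K + 1)),
        hstep K (by omega)]
  have hdist_step : ∀ j < K + 1, dist (z j) (z (j + 1)) ≤ α * δ := fun j hj =>
    dist_le_of_qdist_le (hstep j (by omega)) (by linarith [hE j hj.le, hE (j + 1) hj])
  have hext : dist (z 0) (z (K + 1)) < δ / 4 := by
    linarith [dist_triangle (z 0) (z K) (z (K + 1)), hnear K K.lt_succ_self,
      hdist_step K K.lt_succ_self]
  refine ⟨K + 1, dist_pos.mp (by linarith), fun j hj => ?_, fun j hj => ?_, by linarith⟩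
  · refine (hmem j (hj.trans hkn)).resolve_right fun hjE => ?_
    linarith [hE j hj, infDist_zero_of_mem hjE]
  · nlinarith [hdist_step j hj]

theorem exists_far_chain_of_qdist_chain {B : Set X} {α : ℝ} (hα₀ : 0 ≤ α) (hα : α ≤ 1 / 8)
    (z : ℕ → X) {n : ℕ} (hmem : ∀ j ≤ n, z j ∈ B ∪ E) (hnd : 0 < qdist E (z 0) (z n))
    (hstep : ∀ j < n, qdist E (z j) (z (j + 1)) ≤ α * qdist E (z 0) (z n)) :
    ∃ (w : ℕ → X) (k : ℕ), w 0 ≠ w k ∧ (∀ j ≤ k, w j ∈ B) ∧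
      (∀ j < k, dist (w j) (w (j + 1)) ≤ 8 * α * dist (w 0) (w k)) ∧
      2 * dist (w 0) (w k) < infDist (w 0) E := by
  set δ := qdist E (z 0) (z n)
  have hend : δ ≤ dist (z 0) (z n) := min_le_left _ _
  by_cases hstart : δ / 2 ≤ infDist (z 0) E
  · exact ⟨z, exists_far_chain_of_half_le_infDist hα₀ hα hnd z hmem hstep hend hstart⟩
  have hsum : δ ≤ infDist (z 0) E + infDist (z n) E := min_le_right _ _
  refine ⟨fun j => z (n - j), exists_far_chain_of_half_le_infDist hα₀ hα hnd _ (n := n)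
    (fun j _ => hmem _ (Nat.sub_le n j)) (fun j hj => ?_) ?_ ?_⟩
  · rw [qdist_comm, show n - j = n - (j + 1) + 1 by omega]
    exact hstep _ (by omega)
  · simpa [dist_comm] using hend
  · simp only [Nat.sub_zero]; linarith

end Paper

open Fin.NatCast in
theorem statement9_general (X : Type*) [MetricSpace X] (B E : Set X)
    (α : ℝ) (hα : α ∈ Set.Ioc (0 : ℝ) (1 / 8))
    (n : ℕ) (z : Fin (n + 1) → X) (hzmem : ∀ i, z i ∈ B ∪ E)
    (hznd : 0 < Paper.qdist E (z 0) (z (Fin.last n)))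
    (hzchain : ∀ i : Fin n, Paper.qdist E (z i.castSucc) (z i.succ) ≤
      α * Paper.qdist E (z 0) (z (Fin.last n))) :
    ∃ (m : ℕ) (w : Fin (m + 1) → X), (∀ j, w j ∈ B) ∧ w 0 ≠ w (Fin.last m) ∧
      (∀ j : Fin m, dist (w j.castSucc) (w j.succ) ≤
        8 * α * dist (w 0) (w (Fin.last m))) ∧
      2 * dist (w 0) (w (Fin.last m)) < Metric.infDist (w 0) E := by
  obtain ⟨w, k, hne, hmem, hstep, hfar⟩ :=
    Paper.exists_far_chain_of_qdist_chain hα.1.le hα.2 (fun j : ℕ => z j) (n := n)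
      (fun j _ => hzmem _) (by simpa using hznd) fun j hj => by
        simpa [Fin.natCast_eq_mk (Nat.lt_succ_of_lt hj), Fin.natCast_eq_mk (Nat.succ_lt_succ hj)]
          using hzchain ⟨j, hj⟩
  refine ⟨k, fun j => w j, fun j => hmem j (by omega), by simpa using hne,
    fun j => by simpa using hstep j j.isLt, by simpa using hfar⟩

/-- Lifting relative `α`-chains from the metric quotient `X/E`:
a nondegenerate relative `α`-chain in the image of `B ∪ E` (measured in the quotient
distance `Paper.qdist E`) yields a nondegenerate relative `8α`-chain in `B`, far from
`E` compared with its extent. -/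
theorem statement9 (X : Type*) [MetricSpace X] (B E : Set X) (hE : E.Nonempty)
    (hEc : IsClosed E) (α : ℝ) (hα : α ∈ Set.Ioc (0 : ℝ) (1 / 8))
    (n : ℕ) (z : Fin (n + 1) → X) (hzmem : ∀ i, z i ∈ B ∪ E)
    (hznd : 0 < Paper.qdist E (z 0) (z (Fin.last n)))
    (hzchain : ∀ i : Fin n, Paper.qdist E (z i.castSucc) (z i.succ) ≤
      α * Paper.qdist E (z 0) (z (Fin.last n))) :
    ∃ (m : ℕ) (w : Fin (m + 1) → X), (∀ j, w j ∈ B) ∧ w 0 ≠ w (Fin.last m) ∧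
      (∀ j : Fin m, dist (w j.castSucc) (w j.succ) ≤
        8 * α * dist (w 0) (w (Fin.last m))) ∧
      2 * dist (w 0) (w (Fin.last m)) < Metric.infDist (w 0) E :=
  statement9_general X B E α hα n z hzmem hznd hzchain
end

section
/- Let T be a tree such that the leaf set L(T) is closed in T. Then every accumulation point of the branch set B(T) belongs to L(T); consequently, L(T) ∪ B(T) is closed in T. -/
open Metric Set

/-!
The components of `T \ {b}` are open, the closure of each adds only `b`, and the complement of
each is connected. A Zorn argument on the closed sets that single points cut off from `b` then
shows that every component of `T \ {b}` contains a non-cut point, that is, a leaf.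

If `x` were a non-leaf accumulation point of branch points, all leaves would lie at distance at
least `δ > 0` from `x`, and every branch point `b ≠ x` separates two leaves `ℓ₁ b`, `ℓ₂ b` from `x`
and from each other. Take a cluster point `(μ₁, μ₂)` of `(ℓ₁ b, ℓ₂ b)` as `b → x`, a branch point
`v` near `x`, and then a branch point `u` on the `x`-side of `v`, such that `ℓᵢ u` and `ℓᵢ v` lie
in the component of `μᵢ` outside the closed ball of radius `δ / 2` about `x`. Then `ℓ₁ u` and
`ℓ₂ u` both lie in the complement of the `x`-side of `v`, which is connected and misses `u`, so `u`
does not separate them after all.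
-/

open Filter Topology

theorem isClosed_union_of_forall_mem_closure_sdiff {X : Type*} [TopologicalSpace X]
    {L B : Set X} (hL : IsClosed L) (h : ∀ x, x ∈ closure (B \ {x}) → x ∈ L) :
    IsClosed (L ∪ B) := by
  refine isClosed_of_closure_subset fun x hx => ?_
  rw [closure_union, hL.closure_eq] at hx
  by_cases hxB : x ∈ B
  · exact Or.inr hxB
  · exact Or.inl (hx.elim id fun h' => h x (by rwa [sdiff_singleton_eq_self hxB]))

section ComplSingleton

variable {X : Type*} [TopologicalSpace X]

theorem closure_connectedComponentIn_inter_subset (F : Set X) (x : X) :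
    closure (connectedComponentIn F x) ∩ F ⊆ connectedComponentIn F x := by
  rintro y ⟨hy, hyF⟩
  obtain ⟨z, hz⟩ := closure_nonempty_iff.mp ⟨y, hy⟩
  have hpre : IsPreconnected (insert y (connectedComponentIn F x)) :=
    isPreconnected_connectedComponentIn.subset_closure (subset_insert _ _)
      (insert_subset hy subset_closure)
  rw [connectedComponentIn_eq hz]
  exact hpre.subset_connectedComponentIn (mem_insert_of_mem _ hz)
    (insert_subset hyF (connectedComponentIn_subset _ _)) (mem_insert y _)

theorem mem_connectedComponentIn_trans {F : Set X} {x y z : X} (hy : y ∈ connectedComponentIn F x)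
    (hz : z ∈ connectedComponentIn F y) : z ∈ connectedComponentIn F x :=
  connectedComponentIn_eq hy ▸ hz

theorem mem_connectedComponentIn_of_subset {F G : Set X} (hFG : F ⊆ G) {w y z : X}
    (hy : y ∈ connectedComponentIn F w) (hz : z ∈ connectedComponentIn F w) :
    z ∈ connectedComponentIn G y :=
  isPreconnected_connectedComponentIn.subset_connectedComponentIn hy
    ((connectedComponentIn_subset F w).trans hFG) hz

theorem closure_connectedComponentIn_compl_singleton_subset (p w : X) :
    closure (connectedComponentIn {p}ᶜ w) ⊆ insert p (connectedComponentIn {p}ᶜ w) := by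
  intro y hy
  by_cases hyp : y = p
  · exact Or.inl hyp
  · exact Or.inr (closure_connectedComponentIn_inter_subset _ _ ⟨hy, hyp⟩)

/-- `q` together with the points that `q` separates from `b`. -/
def beyond (b q : X) : Set X := (connectedComponentIn {q}ᶜ b)ᶜ

theorem mem_beyond_self (b q : X) : q ∈ beyond b q :=
  fun hq => connectedComponentIn_subset _ _ hq rfl

variable [T1Space X] [LocallyConnectedSpace X]

theorem isClosed_beyond (b q : X) : IsClosed (beyond b q) :=
  isOpen_compl_singleton.connectedComponentIn.isClosed_compl

variable [ConnectedSpace X]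

theorem mem_closure_connectedComponentIn_compl_singleton {p w : X} (hw : w ≠ p) :
    p ∈ closure (connectedComponentIn {p}ᶜ w) := by
  by_contra hp
  have hclosed : IsClosed (connectedComponentIn {p}ᶜ w) := by
    refine closure_subset_iff_isClosed.mp fun y hy => ?_
    rcases closure_connectedComponentIn_compl_singleton_subset p w hy with rfl | h
    · exact absurd hy hp
    · exact h
  have huniv := IsClopen.eq_univ ⟨hclosed, isOpen_compl_singleton.connectedComponentIn⟩
    ⟨w, mem_connectedComponentIn hw⟩
  exact mem_compl_singleton_iff.mp (connectedComponentIn_subset _ _ (huniv ▸ mem_univ p)) rfl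

theorem closure_connectedComponentIn_compl_singleton {p w : X} (hw : w ≠ p) :
    closure (connectedComponentIn {p}ᶜ w) = insert p (connectedComponentIn {p}ᶜ w) :=
  (closure_connectedComponentIn_compl_singleton_subset p w).antisymm
    (insert_subset (mem_closure_connectedComponentIn_compl_singleton hw) subset_closure)

theorem isPreconnected_insert_connectedComponentIn_compl_singleton (p w : X) :
    IsPreconnected (insert p (connectedComponentIn {p}ᶜ w)) := by
  by_cases hw : w = p
  · rw [connectedComponentIn_eq_empty (by simpa using hw), insert_empty_eq]
    exact isPreconnected_singleton
  · rw [← closure_connectedComponentIn_compl_singleton hw]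
    exact isPreconnected_connectedComponentIn.closure

/-- The complement is the union of `{p}` and of the closures of the other components, all of
which contain `p`. -/
theorem isPreconnected_compl_connectedComponentIn_compl_singleton (p w : X) :
    IsPreconnected (connectedComponentIn {p}ᶜ w)ᶜ := by
  set S : X → Set X := fun y => insert p (connectedComponentIn {p}ᶜ y)
  have hcover :
      (connectedComponentIn {p}ᶜ w)ᶜ = ⋃₀ (S '' (connectedComponentIn {p}ᶜ w)ᶜ) := by
    apply subset_antisymm
    · intro z hz
      refine ⟨S z, mem_image_of_mem S hz, ?_⟩
      by_cases hzp : z = p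
      · exact Or.inl hzp
      · exact Or.inr (mem_connectedComponentIn hzp)
    · rintro z ⟨_, ⟨y, hy, rfl⟩, rfl | hz⟩ hzw
      · exact connectedComponentIn_subset _ _ hzw rfl
      · have hyF : y ∈ ({p}ᶜ : Set X) := connectedComponentIn_nonempty_iff.mp ⟨z, hz⟩
        rw [connectedComponentIn_eq hzw, ← connectedComponentIn_eq hz] at hy
        exact hy (mem_connectedComponentIn hyF)
  rw [hcover]
  refine isPreconnected_sUnion p _ ?_ ?_ <;> rintro _ ⟨y, -, rfl⟩
  · exact mem_insert p _
  · exact isPreconnected_insert_connectedComponentIn_compl_singleton p y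

theorem mem_connectedComponentIn_compl_singleton_of_notMem {v x u y z : X}
    (hu : u ∈ connectedComponentIn {v}ᶜ x) (hy : y ∉ connectedComponentIn {v}ᶜ x)
    (hz : z ∉ connectedComponentIn {v}ᶜ x) : z ∈ connectedComponentIn {u}ᶜ y :=
  -- the complement of the `x`-side of `v` is connected and misses `u`
  (isPreconnected_compl_connectedComponentIn_compl_singleton v x).subset_connectedComponentIn hy
    (compl_subset_compl.mpr (singleton_subset_iff.mpr hu)) hz

theorem beyond_subset_connectedComponentIn {b w q : X} (hq : q ∈ connectedComponentIn {b}ᶜ w) :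
    beyond b q ⊆ connectedComponentIn {b}ᶜ w :=
  compl_subset_comm.mp <|
    (isPreconnected_compl_connectedComponentIn_compl_singleton b w).subset_connectedComponentIn
      (connectedComponentIn_subset _ _ · rfl)
      (compl_subset_compl.mpr (singleton_subset_iff.mpr hq))

theorem beyond_subset_beyond_sdiff {a b c : X} (hcb : c ≠ b) (ha : a ∈ beyond b c)
    (hac : a ≠ c) : beyond b a ⊆ beyond b c \ {c} := by
  have hsub : insert c (connectedComponentIn {c}ᶜ b) ⊆ connectedComponentIn {a}ᶜ b :=
    (isPreconnected_insert_connectedComponentIn_compl_singleton c b).subset_connectedComponentIn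
      (mem_insert_of_mem _ (mem_connectedComponentIn hcb.symm))
      (insert_subset hac.symm fun z hz (hza : z = a) => ha (hza ▸ hz))
  rw [beyond, beyond, sdiff_eq, ← compl_union, union_comm, ← insert_eq]
  exact compl_subset_compl.mpr hsub

end ComplSingleton

namespace Paper

variable {T : Type*} [MetricSpace T]

theorem exists_mem_beyond_ne_of_notMem_leafSet {b q : T} (hqb : q ≠ b) (hq : q ∉ leafSet T) :
    ∃ a ∈ beyond b q, a ≠ q := by
  by_contra! h
  have hcc : connectedComponentIn {q}ᶜ b = {q}ᶜ :=
    (connectedComponentIn_subset _ _).antisymm fun z hz => not_not.mp fun hzn => hz (h z hzn)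
  exact hq (show IsConnected ({q}ᶜ : Set T) from
    hcc ▸ isConnected_connectedComponentIn_iff.mpr hqb.symm)

/-- The closed sets `beyond b q`, for `q` in the component, decrease strictly as `q` moves away
from `b`, so the minimal one given by compactness and Zorn's lemma is cut off by a non-cut point. -/
theorem exists_mem_leafSet_mem_connectedComponentIn [CompactSpace T] [ConnectedSpace T]
    [LocallyConnectedSpace T] {b w : T} (hw : w ≠ b) :
    ∃ q ∈ connectedComponentIn {b}ᶜ w, q ∈ leafSet T := by
  set K := connectedComponentIn {b}ᶜ w
  by_contra! hK
  have hqb : ∀ q ∈ K, q ≠ b := fun q hq => connectedComponentIn_subset _ _ hq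
  have hlb : ∀ ch ⊆ beyond b '' K, IsChain (· ⊆ ·) ch → ch.Nonempty →
      ∃ lb ∈ beyond b '' K, ∀ s ∈ ch, lb ⊆ s := by
    rintro ch hch hchain ⟨s₀, hs₀⟩
    have : Nonempty ch := ⟨⟨s₀, hs₀⟩⟩
    have hcl : ∀ s ∈ ch, IsClosed s := fun s hs => by
      obtain ⟨q, -, rfl⟩ := hch hs
      exact isClosed_beyond b q
    obtain ⟨y, hy⟩ := IsCompact.nonempty_sInter_of_directed_nonempty_isCompact_isClosed
      (IsChain.directedOn (r := fun s t : Set T => s ⊇ t) hchain.symm)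
      (fun s hs => by obtain ⟨q, -, rfl⟩ := hch hs; exact ⟨q, mem_beyond_self b q⟩)
      (fun s hs => (hcl s hs).isCompact) hcl
    obtain ⟨q₀, hq₀, rfl⟩ := hch hs₀
    refine ⟨beyond b y, ⟨y, beyond_subset_connectedComponentIn hq₀ (hy _ hs₀), rfl⟩,
      fun s hs => ?_⟩
    obtain ⟨q, hq, rfl⟩ := hch hs
    rcases eq_or_ne y q with rfl | hyq
    · exact subset_rfl
    · exact (beyond_subset_beyond_sdiff (hqb q hq) (hy _ hs) hyq).trans sdiff_subset
  obtain ⟨m, -, hm⟩ :=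
    zorn_superset_nonempty _ hlb _ ⟨w, mem_connectedComponentIn hw, rfl⟩
  obtain ⟨c, hcK, rfl⟩ := hm.prop
  obtain ⟨a, ha, hac⟩ := exists_mem_beyond_ne_of_notMem_leafSet (hqb c hcK) (hK c hcK)
  have hlt := beyond_subset_beyond_sdiff (hqb c hcK) ha hac
  have hle := hm.le_of_le ⟨a, beyond_subset_connectedComponentIn hcK ha, rfl⟩
    (hlt.trans sdiff_subset)
  exact (hlt (hle (mem_beyond_self b c))).2 rfl

theorem exists_leafSet_notMem_connectedComponentIn_of_mem_branchSet [CompactSpace T]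
    [ConnectedSpace T] [LocallyConnectedSpace T] {b x : T} (hb : b ∈ branchSet T) :
    ∃ ℓ₁ ∈ leafSet T, ∃ ℓ₂ ∈ leafSet T, ℓ₁ ∉ connectedComponentIn {b}ᶜ x ∧
      ℓ₂ ∉ connectedComponentIn {b}ᶜ x ∧
      ℓ₂ ∉ connectedComponentIn {b}ᶜ ℓ₁ := by
  obtain ⟨w₁, hw₁, w₂, hw₂, w₃, hw₃, h12, h13, h23⟩ := hb
  have hpick : ∃ y ∈ ({b}ᶜ : Set T), ∃ z ∈ ({b}ᶜ : Set T),
      connectedComponentIn {b}ᶜ y ≠ connectedComponentIn {b}ᶜ x ∧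
      connectedComponentIn {b}ᶜ z ≠ connectedComponentIn {b}ᶜ x ∧
      connectedComponentIn {b}ᶜ y ≠ connectedComponentIn {b}ᶜ z := by
    by_cases e1 : connectedComponentIn {b}ᶜ w₁ = connectedComponentIn {b}ᶜ x
    · exact ⟨w₂, hw₂, w₃, hw₃, e1 ▸ h12.symm, e1 ▸ h13.symm, h23⟩
    by_cases e2 : connectedComponentIn {b}ᶜ w₂ = connectedComponentIn {b}ᶜ x
    · exact ⟨w₁, hw₁, w₃, hw₃, e1, e2 ▸ h23.symm, h13⟩
    exact ⟨w₁, hw₁, w₂, hw₂, e1, e2, h12⟩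
  have hleaf : ∀ y ∈ ({b}ᶜ : Set T), ∃ ℓ ∈ leafSet T,
      connectedComponentIn {b}ᶜ ℓ = connectedComponentIn {b}ᶜ y := fun y hy => by
    obtain ⟨ℓ, hℓ, hℓL⟩ := exists_mem_leafSet_mem_connectedComponentIn hy
    exact ⟨ℓ, hℓL, (connectedComponentIn_eq hℓ).symm⟩
  obtain ⟨y, hy, z, hz, hyx, hzx, hyz⟩ := hpick
  obtain ⟨ℓ₁, h1L, h1⟩ := hleaf y hy
  obtain ⟨ℓ₂, h2L, h2⟩ := hleaf z hz
  exact ⟨ℓ₁, h1L, ℓ₂, h2L, fun h => hyx (h1 ▸ (connectedComponentIn_eq h).symm),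
    fun h => hzx (h2 ▸ (connectedComponentIn_eq h).symm),
    fun h => hyz (h1 ▸ h2 ▸ connectedComponentIn_eq h)⟩

theorem mem_leafSet_of_mem_closure_branchSet_sdiff [CompactSpace T] [ConnectedSpace T]
    [LocallyConnectedSpace T] (hL : IsClosed (leafSet T)) {x : T}
    (hx : x ∈ closure (branchSet T \ {x})) : x ∈ leafSet T := by
  by_contra hxL
  set F := 𝓝[branchSet T \ {x}] x
  have hF : F.NeBot := mem_closure_iff_nhdsWithin_neBot.mp hx
  obtain ⟨b₀, hb₀⟩ := hF.nonempty_of_mem self_mem_nhdsWithin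
  obtain ⟨ℓ₀, -, hℓ₀⟩ := exists_mem_leafSet_mem_connectedComponentIn hb₀.2
  set δ := infDist x (leafSet T)
  have hδ : 0 < δ := (hL.notMem_iff_infDist_pos ⟨ℓ₀, hℓ₀⟩).mp hxL
  choose! ℓ₁ hℓ₁ ℓ₂ hℓ₂ hℓ using fun b (hb : b ∈ branchSet T \ {x}) =>
    exists_leafSet_notMem_connectedComponentIn_of_mem_branchSet (x := x) hb.1
  have hnear : ∀ᶠ b in F, b ∈ branchSet T \ {x} ∧ b ∈ closedBall x (δ / 2) :=
    eventually_mem_nhdsWithin.and <|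
      mem_nhdsWithin_of_mem_nhds (closedBall_mem_nhds x (half_pos hδ))
  obtain ⟨μ, hμL, hμ⟩ := (hL.isCompact.prod hL.isCompact).exists_mapClusterPt_of_frequently
    (f := fun b => (ℓ₁ b, ℓ₂ b))
    (hnear.frequently.mono fun b hb => ⟨hℓ₁ b hb.1, hℓ₂ b hb.1⟩)
  set V : T → Set T := connectedComponentIn (closedBall x (δ / 2))ᶜ
  have hVμ : ∀ μ' ∈ leafSet T, V μ' ∈ 𝓝 μ' := fun μ' hμ' =>
    connectedComponentIn_mem_nhds <| isClosed_closedBall.isOpen_compl.mem_nhds fun h =>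
      (half_lt_self hδ).not_ge ((infDist_le_dist_of_mem hμ').trans (dist_comm x μ' ▸ h))
  have hfreq := mapClusterPt_iff_frequently.mp hμ _ (prod_mem_nhds (hVμ _ hμL.1) (hVμ _ hμL.2))
  obtain ⟨v, hvV, hvB, hvx⟩ := (hfreq.and_eventually hnear).exists
  have hside : ∀ᶠ b in F, b ∈ connectedComponentIn {v}ᶜ x :=
    mem_nhdsWithin_of_mem_nhds (connectedComponentIn_mem_nhds (isOpen_compl_singleton.mem_nhds
      (Ne.symm hvB.2)))
  obtain ⟨u, huV, huB, hux⟩ :=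
    (hfreq.and_eventually (eventually_mem_nhdsWithin.and hside)).exists
  obtain ⟨hv₁, hv₂, -⟩ := hℓ v hvB
  -- the leaves `ℓ u` are joined to the leaves `ℓ v` far away from `x`, hence away from `v`
  have hVv : (closedBall x (δ / 2))ᶜ ⊆ {v}ᶜ :=
    compl_subset_compl.mpr (singleton_subset_iff.mpr hvx)
  have hu₁ : ℓ₁ u ∉ connectedComponentIn {v}ᶜ x := fun h =>
    hv₁ (mem_connectedComponentIn_trans h (mem_connectedComponentIn_of_subset hVv huV.1 hvV.1))
  have hu₂ : ℓ₂ u ∉ connectedComponentIn {v}ᶜ x := fun h =>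
    hv₂ (mem_connectedComponentIn_trans h (mem_connectedComponentIn_of_subset hVv huV.2 hvV.2))
  exact (hℓ u huB).2.2 (mem_connectedComponentIn_compl_singleton_of_notMem hux hu₁ hu₂)

end Paper

/-- If the leaf set of a tree `T` is closed, then every
accumulation point of the branch set is a leaf; consequently `L(T) ∪ B(T)` is
closed. -/
theorem statement14 (T : Type*) [MetricSpace T] (htree : Paper.IsTree T)
    (hLcl : IsClosed (Paper.leafSet T)) :
    (∀ x : T, x ∈ closure (Paper.branchSet T \ {x}) → x ∈ Paper.leafSet T) ∧
    IsClosed (Paper.leafSet T ∪ Paper.branchSet T) := by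
  obtain ⟨hcomp, hconn, hlc, -⟩ := htree
  have hacc : ∀ x : T, x ∈ closure (Paper.branchSet T \ {x}) → x ∈ Paper.leafSet T :=
    fun x hx => Paper.mem_leafSet_of_mem_closure_branchSet_sdiff hLcl hx
  exact ⟨hacc, isClosed_union_of_forall_mem_closure_sdiff hLcl hacc⟩
end
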